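/- Let r be a nonzero integer, let a = (a₁,a₂)ᵀ, b = (b₁,b₂)ᵀ ∈ ℝ², set θ = a₁b₂ − a₂b₁, and let 𝐜 ∈ ℝ². For (ζ, y) ∈ Γ_r define the map T_{(ζ,y)} of ℂ² by T_{(ζ,y)}(w,z) = (w + ζa, z + (ζb) w + ζ𝐜 − (θ/r) y + (1/2)(ζa)(ζb)), where ζa, ζb, ζ𝐜 denote the products of the row vector ζ with the column vectors a, b, 𝐜. Then each T_{(ζ,y)} is a bijection of ℂ² and (ζ,y) ↦ T_{(ζ,y)} is a group action, i.e., T_{(ζ,y)(ζ',y')} = T_{(ζ,y)} ∘ T_{(ζ',y')} for all (ζ,y), (ζ',y') ∈ Γ_r. -/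
import Mathlib



/-- `ℤ[r/2]`: the additive subgroup of `ℚ` generated by `1` and `r/2`;
it equals `ℤ` if `r` is even and `(1/2)ℤ` if `r` is odd. -/
def Zr (r : ℤ) : AddSubgroup ℚ := AddSubgroup.closure {1, (r : ℚ) / 2}

lemma intCast_mem_Zr (r n : ℤ) : (n : ℚ) ∈ Zr r := by
  have h1 : (1 : ℚ) ∈ Zr r := AddSubgroup.subset_closure (by simp)
  simpa using AddSubgroup.zsmul_mem _ h1 n

lemma half_mul_intCast_mem_Zr (r n : ℤ) : (r : ℚ) / 2 * (n : ℚ) ∈ Zr r := by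
  have h1 : (r : ℚ) / 2 ∈ Zr r := AddSubgroup.subset_closure (by simp)
  have := AddSubgroup.zsmul_mem _ h1 n
  simpa [zsmul_eq_mul, mul_comm] using this

/-- The group `Γ_r`, with underlying set `ℤ² × ℤ[r/2]` and multiplication
`(ζ, y)(ζ', y') = (ζ + ζ', y + y' + (r/2) det(ζ, ζ'))`. -/
@[ext]
structure GammaR (r : ℤ) where
  zeta : Fin 2 → ℤ
  y : ℚ
  hy : y ∈ Zr r

namespace GammaR

variable {r : ℤ}

instance : Mul (GammaR r) :=
  ⟨fun a b =>
    ⟨a.zeta + b.zeta,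
     a.y + b.y + (r : ℚ) / 2 * ((a.zeta 0 * b.zeta 1 - a.zeta 1 * b.zeta 0 : ℤ) : ℚ),
     add_mem (add_mem a.hy b.hy) (half_mul_intCast_mem_Zr r _)⟩⟩

instance : One (GammaR r) := ⟨⟨0, 0, zero_mem _⟩⟩

instance : Inv (GammaR r) := ⟨fun a => ⟨-a.zeta, -a.y, neg_mem a.hy⟩⟩

@[simp] lemma mul_zeta (a b : GammaR r) : (a * b).zeta = a.zeta + b.zeta := rfl
@[simp] lemma mul_y (a b : GammaR r) :
    (a * b).y = a.y + b.y + (r : ℚ) / 2 *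
      ((a.zeta 0 * b.zeta 1 - a.zeta 1 * b.zeta 0 : ℤ) : ℚ) := rfl
@[simp] lemma one_zeta : (1 : GammaR r).zeta = 0 := rfl
@[simp] lemma one_y : (1 : GammaR r).y = 0 := rfl
@[simp] lemma inv_zeta (a : GammaR r) : a⁻¹.zeta = -a.zeta := rfl
@[simp] lemma inv_y (a : GammaR r) : a⁻¹.y = -a.y := rfl

instance : Group (GammaR r) where
  mul_assoc a b c := by
    ext
    · simp [add_assoc]
    · simp only [mul_y, mul_zeta, Pi.add_apply]
      push_cast
      ring
  one_mul a := by ext <;> simp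
  mul_one a := by ext <;> simp
  inv_mul_cancel a := by
    ext
    · simp
    · simp only [mul_y, inv_y, inv_zeta, Pi.neg_apply, one_y]
      push_cast
      ring

/-- The element `((l₁,l₂), l₃ + l₁l₂r/2)` of `Γ_r`. -/
def elt (r l1 l2 l3 : ℤ) : GammaR r :=
  ⟨![l1, l2], (l3 : ℚ) + (l1 : ℚ) * (l2 : ℚ) * (r : ℚ) / 2, by
    have h1 := intCast_mem_Zr r l3
    have h2 := half_mul_intCast_mem_Zr r (l1 * l2)
    have : (l3 : ℚ) + (r : ℚ) / 2 * ((l1 * l2 : ℤ) : ℚ) ∈ Zr r := add_mem h1 h2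
    convert this using 1
    push_cast
    ring⟩

end GammaR

/-- The maps `T_{(ζ,y)}(w,z) = (w + ζa, z + (ζb)w + ζ𝐜 − (θ/r)y + ½(ζa)(ζb))` are
bijections of `ℂ²` and define an action of `Γ_r` on `ℂ²`:
`T_{(ζ,y)(ζ',y')} = T_{(ζ,y)} ∘ T_{(ζ',y')}`. -/
theorem stmt_16 (r : ℤ) (hr : r ≠ 0) (a b cv : Fin 2 → ℝ)
    (θ : ℝ) (hθ : θ = a 0 * b 1 - a 1 * b 0)
    (T : GammaR r → ℂ × ℂ → ℂ × ℂ)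
    (hT : ∀ (g : GammaR r) (w z : ℂ), T g (w, z) =
      (w + ((g.zeta 0 * a 0 + g.zeta 1 * a 1 : ℝ) : ℂ),
       z + ((g.zeta 0 * b 0 + g.zeta 1 * b 1 : ℝ) : ℂ) * w +
         ((g.zeta 0 * cv 0 + g.zeta 1 * cv 1 : ℝ) : ℂ) -
         ((θ / (r : ℝ) : ℝ) : ℂ) * ((g.y : ℚ) : ℂ) +
         (1 / 2 : ℂ) * ((g.zeta 0 * a 0 + g.zeta 1 * a 1 : ℝ) : ℂ) *
           ((g.zeta 0 * b 0 + g.zeta 1 * b 1 : ℝ) : ℂ))) :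
    (∀ g : GammaR r, Function.Bijective (T g)) ∧
    (∀ g g' : GammaR r, T (g * g') = T g ∘ T g') := by
  have hrC : ((r : ℝ) : ℂ) ≠ 0 := by
    exact_mod_cast (Int.cast_ne_zero (α := ℝ)).mpr hr
  have hmul : ∀ g g' : GammaR r, T (g * g') = T g ∘ T g' := by
    intro g g'
    funext p
    obtain ⟨w, z⟩ := p
    simp only [Function.comp_apply, hT]
    refine Prod.ext ?_ ?_
    · simp only [GammaR.mul_zeta, Pi.add_apply]
      push_cast
      ring
    · simp only [GammaR.mul_zeta, GammaR.mul_y, Pi.add_apply]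
      subst hθ
      push_cast
      have hrC2 : ((r : ℤ) : ℂ) ≠ 0 := Int.cast_ne_zero.mpr hr
      field_simp
      ring_nf
  refine ⟨fun g => ?_, hmul⟩
  have hid : T 1 = id := by
    funext p
    obtain ⟨w, z⟩ := p
    simp [hT]
  have h1 : T g ∘ T g⁻¹ = id := by rw [← hmul, mul_inv_cancel, hid]
  have h2 : T g⁻¹ ∘ T g = id := by rw [← hmul, inv_mul_cancel, hid]
  exact ⟨Function.LeftInverse.injective (g := T g⁻¹) (fun x => congrFun h2 x),
    Function.RightInverse.surjective (g := T g⁻¹) (fun x => congrFun h1 x)⟩
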